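/- Let k ≥ 1 and b be integers with b ≥ k − 1, and set α₀ = (−k, b) ∈ ℤ². Let v_1, …, v_n ∈ ℤ × ℤ be vectors each with first coordinate ≥ 1, define α_i = α_{i−1} + v_i, and suppose v_i ∧ α_{i−1} > 0 for every i = 1, …, n, where for u = (u₁,u₂) and v = (v₁,v₂) in ℤ² the wedge is u ∧ v := u₁v₂ − u₂v₁. If moreover n ≥ 1 or (k, b) ≠ (1, 0), then α_n ≠ (−1, 0). -/

import Mathlib

/-!
Write `α = (x, y)`. First coordinates only grow, so a walk ending at `(-1, 0)` stays in the
half-plane `x ≤ -1`. There every allowed step keeps `x + y + 1 ≥ 0` and in fact makes it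
positive; since the start `(-k, b)` satisfies it and `(-1, 0)` has `x + y + 1 = 0`, the last
step cannot land there.
-/

def wedge (u v : ℤ × ℤ) : ℤ := u.1 * v.2 - u.2 * v.1

theorem fst_add_snd_add_one_pos_of_wedge_pos {p w : ℤ × ℤ} (hp : 0 ≤ p.1 + p.2 + 1)
    (hw : 0 ≤ w.1) (hwedge : 0 < wedge w p) (hnext : (p + w).1 ≤ -1) :
    0 < (p + w).1 + (p + w).2 + 1 := by
  obtain ⟨x, y⟩ := p
  obtain ⟨a, c⟩ := w
  simp only [wedge, Prod.fst_add, Prod.snd_add] at *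
  have hx : 0 < -x := by omega
  have key : -x * (x + a + (y + c) + 1) = (x + y + 1) * (-x - a) + a + (a * y - c * x) := by
    ring
  have : 0 < -x * (x + a + (y + c) + 1) := by
    rw [key]
    linarith [mul_nonneg hp (show (0 : ℤ) ≤ -x - a by omega)]
  exact pos_of_mul_pos_right this hx.le

section Walk

variable {n : ℕ} {α v : ℕ → ℤ × ℤ}

theorem fst_le_fst_of_le (hv : ∀ i < n, 0 ≤ (v i).1) (hstep : ∀ i < n, α (i + 1) = α i + v i)
    {i j : ℕ} (hij : i ≤ j) (hjn : j ≤ n) : (α i).1 ≤ (α j).1 := by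
  induction j, hij using Nat.le_induction with
  | base => rfl
  | succ j _ ih =>
    rw [hstep j (by omega), Prod.fst_add]
    linarith [ih (by omega), hv j (by omega)]

theorem fst_add_snd_add_one_pos (h0 : 0 ≤ (α 0).1 + (α 0).2 + 1) (hv : ∀ i < n, 0 ≤ (v i).1)
    (hstep : ∀ i < n, α (i + 1) = α i + v i) (hwedge : ∀ i < n, 0 < wedge (v i) (α i))
    (hlast : (α n).1 ≤ -1) : ∀ i < n, 0 < (α (i + 1)).1 + (α (i + 1)).2 + 1 := by
  have hsucc (i : ℕ) (hi : i < n) (hs : 0 ≤ (α i).1 + (α i).2 + 1) :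
      0 < (α (i + 1)).1 + (α (i + 1)).2 + 1 := by
    have hstay : (α i + v i).1 ≤ -1 :=
      hstep i hi ▸ (fst_le_fst_of_le hv hstep hi le_rfl).trans hlast
    simpa only [hstep i hi] using
      fst_add_snd_add_one_pos_of_wedge_pos hs (hv i hi) (hwedge i hi) hstay
  intro i
  induction i with
  | zero => exact fun hi => hsucc 0 hi h0
  | succ i ih => exact fun hi => hsucc (i + 1) hi (ih (by omega)).le

end Walk

theorem not_reachable_general (k b : ℤ) (hb : k - 1 ≤ b)
    (n : ℕ) (α : ℕ → ℤ × ℤ) (v : ℕ → ℤ × ℤ)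
    (h0 : α 0 = (-k, b))
    (hv : ∀ i < n, 1 ≤ (v i).1)
    (hstep : ∀ i < n, α (i + 1) = α i + v i)
    (hwedge : ∀ i < n, 0 < (v i).1 * (α i).2 - (v i).2 * (α i).1)
    (hnontriv : 1 ≤ n ∨ (k, b) ≠ (1, 0)) :
    α n ≠ (-1, 0) := by
  intro hα
  cases n with
  | zero =>
    refine hnontriv.resolve_left (by omega) ?_
    obtain ⟨hk, rfl⟩ := Prod.ext_iff.mp (h0.symm.trans hα)
    rw [neg_inj.mp hk]
  | succ m =>
    have hpos := fst_add_snd_add_one_pos (by rw [h0]; dsimp only; omega)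
      (fun i hi => zero_le_one.trans (hv i hi)) hstep hwedge (by rw [hα]) m m.lt_succ_self
    simp [hα] at hpos

/-- Non-reachability of `(-1, 0)` from `(-k, b)` with `b ≥ k - 1`: interacting
with vectors `(a, b')`, `a ≥ 1`, under the positivity condition
`v_i ∧ α_{i-1} > 0` (with `u ∧ v := u₁v₂ - u₂v₁`) can never produce `(-1, 0)`,
except in the trivial case `n = 0`, `(k, b) = (1, 0)`. -/
theorem not_reachable (k b : ℤ) (hk : 1 ≤ k) (hb : k - 1 ≤ b)
    (n : ℕ) (α : ℕ → ℤ × ℤ) (v : ℕ → ℤ × ℤ)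
    (h0 : α 0 = (-k, b))
    (hv : ∀ i < n, 1 ≤ (v i).1)
    (hstep : ∀ i < n, α (i + 1) = α i + v i)
    (hwedge : ∀ i < n, 0 < (v i).1 * (α i).2 - (v i).2 * (α i).1)
    (hnontriv : 1 ≤ n ∨ (k, b) ≠ (1, 0)) :
    α n ≠ (-1, 0) :=
  not_reachable_general k b hb n α v h0 hv hstep hwedge hnontriv
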